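/- arXiv:1912.03536 — 2 statements merged into one kernel-verified Lean document; each statement's English description precedes it below -/
import Mathlib

section
/- Let σ ∈ GL_n(R) such that σ_{11} is right invertible (i.e., there exists z ∈ R with σ_{11} z = 1). Then for any indices k ≠ l and any a, b ∈ R, the elementary transvection t_{kl}(a σ_{1n} b) is a product of 8 elements, each of which is an E_n(R)-conjugate of σ or of σ^{-1}. -/
open Matrix

/-- The ring of n×n matrices over R. -/
abbrev Mat (n : ℕ) (R : Type*) [Ring R] := Matrix (Fin n) (Fin n) R

/-- The elementary transvection t_{ij}(x) = e + x·e^{ij}. -/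
def trv {n : ℕ} {R : Type*} [Ring R] (i j : Fin n) (x : R) : Mat n R :=
  1 + Matrix.single i j x

/-- The elementary subgroup E_n(R) of GL_n(R), generated by the elementary
transvections t_{ij}(x) with i ≠ j. -/
def En (n : ℕ) (R : Type*) [Ring R] : Subgroup (Mat n R)ˣ :=
  Subgroup.closure
    { u : (Mat n R)ˣ | ∃ i j : Fin n, i ≠ j ∧ ∃ x : R, u.val = trv i j x }

/-- `A` is a product of `m` E_n(R)-conjugates of `σ` and `σ⁻¹`, i.e.
`A = g₁ ⋯ g_m` where each `g_p = ξ_p⁻¹ τ_p ξ_p` with `τ_p ∈ {σ, σ⁻¹}` and `ξ_p ∈ E_n(R)`. -/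
def IsProdConj {n : ℕ} {R : Type*} [Ring R] (m : ℕ) (σ : (Mat n R)ˣ) (A : Mat n R) : Prop :=
  ∃ g : Fin m → (Mat n R)ˣ,
    (∀ p, ∃ ξ ∈ En n R, g p = ξ⁻¹ * σ * ξ ∨ g p = ξ⁻¹ * σ⁻¹ * ξ) ∧
    (List.ofFn g).prod.val = A

section Aux3
variable {n : ℕ} {R : Type*} [Ring R]

lemma stdBasisMatrix_neg (i j : Fin n) (x : R) :
    single i j (-x) = -single i j x := by
  ext a b
  by_cases h : i = a ∧ j = b
  · simp [single, h]
  · simp [single, h]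

lemma trv_mul_trv_same {i j : Fin n} (h : i ≠ j) (x y : R) :
    trv i j x * trv i j y = trv i j (x + y) := by
  unfold trv
  rw [add_mul, mul_add, mul_add,
    single_mul_single_of_ne x i j _ (fun hji => h hji.symm) y, single_add]
  simp only [one_mul, mul_one]
  abel

def tu (i j : Fin n) (h : i ≠ j) (x : R) : (Mat n R)ˣ where
  val := trv i j x
  inv := trv i j (-x)
  val_inv := by rw [trv_mul_trv_same h, add_neg_cancel]; simp [trv]
  inv_val := by rw [trv_mul_trv_same h, neg_add_cancel]; simp [trv]

@[simp] lemma tu_val {i j : Fin n} (h : i ≠ j) (x : R) : (tu i j h x).val = trv i j x := rfl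
@[simp] lemma tu_inv_val {i j : Fin n} (h : i ≠ j) (x : R) :
    ((tu i j h x)⁻¹).val = trv i j (-x) := rfl

lemma tu_mem {i j : Fin n} (h : i ≠ j) (x : R) : tu i j h x ∈ En n R :=
  Subgroup.subset_closure ⟨i, j, h, x, rfl⟩

/-- Row-type unipotent `1 + Σ_{j∈S} E_{i j}(f j)` is in `En` (when `i ∉ S`). -/
lemma row_sum_unit (i : Fin n) (f : Fin n → R) (S : Finset (Fin n)) (hiS : i ∉ S) :
    ∃ u : (Mat n R)ˣ, u ∈ En n R ∧
      u.val = 1 + ∑ j ∈ S, single i j (f j) ∧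
      (u⁻¹).val = 1 - ∑ j ∈ S, single i j (f j) := by
  induction S using Finset.induction_on with
  | empty => exact ⟨1, one_mem _, by simp, by simp⟩
  | @insert j S hjS ih =>
    have hiS' : i ∉ S := fun h => hiS (Finset.mem_insert_of_mem h)
    have hij : i ≠ j := fun h => hiS (h ▸ Finset.mem_insert_self j S)
    obtain ⟨u, hu, hval, hinv⟩ := ih hiS'
    have hEzero : ∀ j' ∈ S, single i j (f j) * single i j' (f j') = 0 :=
      fun j' _ => single_mul_single_of_ne (f j) i j _ (fun h => hij h.symm) (f j')
    have hEzero' : ∀ j' ∈ S, single i j' (f j') * single i j (-(f j)) = 0 := by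
      intro j' hj'
      have : i ≠ j' := fun h => hiS' (h ▸ hj')
      exact single_mul_single_of_ne (f j') i j' _ (fun h => this h.symm) _
    refine ⟨tu i j hij (f j) * u, mul_mem (tu_mem hij (f j)) hu, ?_, ?_⟩
    · rw [Units.val_mul, tu_val, hval, Finset.sum_insert hjS]
      unfold trv
      have hmul : single i j (f j) * ∑ j' ∈ S, single i j' (f j') = 0 := by
        rw [Finset.mul_sum]; exact Finset.sum_eq_zero hEzero
      rw [add_mul, mul_add, mul_add, hmul]
      simp only [one_mul, mul_one]
      abel
    · rw [_root_.mul_inv_rev, Units.val_mul, hinv, tu_inv_val, Finset.sum_insert hjS]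
      unfold trv
      have hmul : (∑ j' ∈ S, single i j' (f j')) * single i j (-(f j)) = 0 := by
        rw [Finset.sum_mul]; exact Finset.sum_eq_zero hEzero'
      rw [sub_mul, mul_add, mul_add, hmul]
      simp only [one_mul, mul_one, stdBasisMatrix_neg]
      abel

/-- Column-type unipotent `1 + Σ_{i∈S} E_{i j}(f i)` is in `En` (when `j ∉ S`). -/
lemma col_sum_unit (j : Fin n) (f : Fin n → R) (S : Finset (Fin n)) (hjS : j ∉ S) :
    ∃ u : (Mat n R)ˣ, u ∈ En n R ∧
      u.val = 1 + ∑ i ∈ S, single i j (f i) ∧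
      (u⁻¹).val = 1 - ∑ i ∈ S, single i j (f i) := by
  induction S using Finset.induction_on with
  | empty => exact ⟨1, one_mem _, by simp, by simp⟩
  | @insert i S hiS ih =>
    have hjS' : j ∉ S := fun h => hjS (Finset.mem_insert_of_mem h)
    have hij : i ≠ j := fun h => hjS (h ▸ Finset.mem_insert_self i S)
    obtain ⟨u, hu, hval, hinv⟩ := ih hjS'
    have hEzero : ∀ i' ∈ S, single i j (f i) * single i' j (f i') = 0 := by
      intro i' hi'
      have : i' ≠ j := fun h => hjS' (h ▸ hi')
      exact single_mul_single_of_ne (f i) i j _ (Ne.symm this) (f i')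
    have hEzero' : ∀ i' ∈ S, single i' j (f i') * single i j (-(f i)) = 0 :=
      fun i' _ => single_mul_single_of_ne (f i') i' j _ (Ne.symm hij) _
    refine ⟨tu i j hij (f i) * u, mul_mem (tu_mem hij (f i)) hu, ?_, ?_⟩
    · rw [Units.val_mul, tu_val, hval, Finset.sum_insert hiS]
      unfold trv
      have hmul : single i j (f i) * ∑ i' ∈ S, single i' j (f i') = 0 := by
        rw [Finset.mul_sum]; exact Finset.sum_eq_zero hEzero
      rw [add_mul, mul_add, mul_add, hmul]
      simp only [one_mul, mul_one]
      abel
    · rw [_root_.mul_inv_rev, Units.val_mul, hinv, tu_inv_val, Finset.sum_insert hiS]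
      unfold trv
      have hmul : (∑ i' ∈ S, single i' j (f i')) * single i j (-(f i)) = 0 := by
        rw [Finset.sum_mul]; exact Finset.sum_eq_zero hEzero'
      rw [sub_mul, mul_add, mul_add, hmul]
      simp only [one_mul, mul_one, stdBasisMatrix_neg]
      abel

end Aux3

section Aux2
variable {n : ℕ} {R : Type*} [Ring R]

lemma ESE (i j k l : Fin n) (x y : R) (M : Matrix (Fin n) (Fin n) R) :
    single i j x * M * single k l y = single i l (x * M j k * y) := by
  ext a b
  rcases eq_or_ne b l with rfl | hb
  · rw [mul_single_apply_same]
    rcases eq_or_ne a i with rfl | ha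
    · rw [single_mul_apply_same, single_apply_same]
    · rw [single_mul_apply_of_ne x i j a k ha M,
        single_apply_of_row_ne (Ne.symm ha), zero_mul]
  · rw [mul_single_apply_of_ne y k l a b hb,
      single_apply_of_col_ne _ _ (Ne.symm hb)]

lemma trv_neg (i j : Fin n) (x : R) :
    trv i j (-x) = 1 - single i j x := by
  unfold trv
  rw [stdBasisMatrix_neg]
  abel

lemma comm4 (X N : Mat n R) (hX : X * X = 0) (hN : N * N = 0) (hNX : N * X = 0) :
    (1 + X) * (1 + N) * (1 - X) * (1 - N) = 1 + X * N := by
  have big : (1 + X) * (1 + N) * ((1 : Mat n R) - X) * (1 - N) =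
      1 + X * N - X * X + (X * X) * N - N * X - N * N + (N * X) * N
        - X * (N * X) - X * (N * N) + X * ((N * X) * N) := by noncomm_ring
  rw [big, hX, hNX, hN]
  noncomm_ring

end Aux2

section AuxW
variable {n : ℕ} {R : Type*} [Ring R]

def wey (p q : Fin n) (h : p ≠ q) : (Mat n R)ˣ :=
  tu p q h 1 * tu q p h.symm (-1) * tu p q h 1

lemma wey_val (p q : Fin n) (h : p ≠ q) :
    (wey p q h).val = 1 + single p q (1 : R) - single q p 1
      - single p p 1 - single q q 1 := by
  have z1 : ∀ (i : Fin n) (c : R) (l : Fin n) (d : R),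
      single i p c * single q l d = 0 :=
    fun i c l d => single_mul_single_of_ne c i p _ h d
  have z2 : ∀ (i : Fin n) (c : R) (l : Fin n) (d : R),
      single i q c * single p l d = 0 :=
    fun i c l d => single_mul_single_of_ne c i q _ h.symm d
  show trv p q (1 : R) * trv q p (-1) * trv p q 1 = _
  unfold trv
  simp only [add_mul, mul_add, one_mul, mul_one, single_mul_single_same, z1, z2,
    zero_mul, mul_zero, add_zero, zero_add, neg_mul, mul_neg, stdBasisMatrix_neg,
    neg_neg, one_mul]
  abel

lemma wey_inv_val (p q : Fin n) (h : p ≠ q) :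
    ((wey p q h)⁻¹).val = 1 - single p q (1 : R) + single q p 1
      - single p p 1 - single q q 1 := by
  have z1 : ∀ (i : Fin n) (c : R) (l : Fin n) (d : R),
      single i p c * single q l d = 0 :=
    fun i c l d => single_mul_single_of_ne c i p _ h d
  have z2 : ∀ (i : Fin n) (c : R) (l : Fin n) (d : R),
      single i q c * single p l d = 0 :=
    fun i c l d => single_mul_single_of_ne c i q _ h.symm d
  show trv p q (-(1 : R)) * (trv q p (-(-1)) * trv p q (-1)) = _
  unfold trv
  simp only [add_mul, mul_add, one_mul, mul_one, single_mul_single_same, z1, z2,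
    zero_mul, mul_zero, add_zero, zero_add, neg_mul, mul_neg, stdBasisMatrix_neg,
    neg_neg, one_mul]
  abel


end AuxW

section AuxW2
variable {n : ℕ} {R : Type*} [Ring R]

lemma weyA (p q r : Fin n) (hpq : p ≠ q) (hrp : r ≠ p) (hrq : r ≠ q) (d : R) :
    (wey p q hpq)⁻¹ * tu r p hrp d * wey p q hpq = tu r q hrq d := by
  apply Units.ext
  rw [Units.val_mul, Units.val_mul, wey_val, wey_inv_val, tu_val, tu_val]
  unfold trv
  have z1 : ∀ (i : Fin n) (c : R) (l : Fin n) (e : R),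
      single i p c * single q l e = 0 :=
    fun i c l e => single_mul_single_of_ne c i p _ hpq e
  have z2 : ∀ (i : Fin n) (c : R) (l : Fin n) (e : R),
      single i q c * single p l e = 0 :=
    fun i c l e => single_mul_single_of_ne c i q _ hpq.symm e
  have z3 : ∀ (i : Fin n) (c : R) (l : Fin n) (e : R),
      single i p c * single r l e = 0 :=
    fun i c l e => single_mul_single_of_ne c i p _ hrp.symm e
  have z4 : ∀ (i : Fin n) (c : R) (l : Fin n) (e : R),
      single i r c * single p l e = 0 :=
    fun i c l e => single_mul_single_of_ne c i r _ hrp e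
  have z5 : ∀ (i : Fin n) (c : R) (l : Fin n) (e : R),
      single i q c * single r l e = 0 :=
    fun i c l e => single_mul_single_of_ne c i q _ hrq.symm e
  have z6 : ∀ (i : Fin n) (c : R) (l : Fin n) (e : R),
      single i r c * single q l e = 0 :=
    fun i c l e => single_mul_single_of_ne c i r _ hrq e
  simp only [add_mul, mul_add, sub_mul, mul_sub, one_mul, mul_one, neg_mul, mul_neg,
    single_mul_single_same, z1, z2, z3, z4, z5, z6,
    zero_mul, mul_zero, add_zero, zero_add, sub_zero, zero_sub, neg_zero, neg_neg,
    stdBasisMatrix_neg]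
  abel

lemma weyB (p q r : Fin n) (hpq : p ≠ q) (hrp : r ≠ p) (hrq : r ≠ q) (d : R) :
    (wey p q hpq)⁻¹ * tu p r (Ne.symm hrp) d * wey p q hpq = tu q r (Ne.symm hrq) d := by
  apply Units.ext
  rw [Units.val_mul, Units.val_mul, wey_val, wey_inv_val, tu_val, tu_val]
  unfold trv
  have z1 : ∀ (i : Fin n) (c : R) (l : Fin n) (e : R),
      single i p c * single q l e = 0 :=
    fun i c l e => single_mul_single_of_ne c i p _ hpq e
  have z2 : ∀ (i : Fin n) (c : R) (l : Fin n) (e : R),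
      single i q c * single p l e = 0 :=
    fun i c l e => single_mul_single_of_ne c i q _ hpq.symm e
  have z3 : ∀ (i : Fin n) (c : R) (l : Fin n) (e : R),
      single i p c * single r l e = 0 :=
    fun i c l e => single_mul_single_of_ne c i p _ hrp.symm e
  have z4 : ∀ (i : Fin n) (c : R) (l : Fin n) (e : R),
      single i r c * single p l e = 0 :=
    fun i c l e => single_mul_single_of_ne c i r _ hrp e
  have z5 : ∀ (i : Fin n) (c : R) (l : Fin n) (e : R),
      single i q c * single r l e = 0 :=
    fun i c l e => single_mul_single_of_ne c i q _ hrq.symm e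
  have z6 : ∀ (i : Fin n) (c : R) (l : Fin n) (e : R),
      single i r c * single q l e = 0 :=
    fun i c l e => single_mul_single_of_ne c i r _ hrq e
  simp only [add_mul, mul_add, sub_mul, mul_sub, one_mul, mul_one, neg_mul, mul_neg,
    single_mul_single_same, z1, z2, z3, z4, z5, z6,
    zero_mul, mul_zero, add_zero, zero_add, sub_zero, zero_sub, neg_zero, neg_neg,
    stdBasisMatrix_neg]
  abel

lemma weyC (p q : Fin n) (hpq : p ≠ q) (d : R) :
    (wey p q hpq)⁻¹ * tu p q hpq d * wey p q hpq = tu q p (Ne.symm hpq) (-d) := by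
  apply Units.ext
  rw [Units.val_mul, Units.val_mul, wey_val, wey_inv_val, tu_val, tu_val]
  unfold trv
  have z1 : ∀ (i : Fin n) (c : R) (l : Fin n) (e : R),
      single i p c * single q l e = 0 :=
    fun i c l e => single_mul_single_of_ne c i p _ hpq e
  have z2 : ∀ (i : Fin n) (c : R) (l : Fin n) (e : R),
      single i q c * single p l e = 0 :=
    fun i c l e => single_mul_single_of_ne c i q _ hpq.symm e
  simp only [add_mul, mul_add, sub_mul, mul_sub, one_mul, mul_one, neg_mul, mul_neg,
    single_mul_single_same, z1, z2,
    zero_mul, mul_zero, add_zero, zero_add, sub_zero, zero_sub, neg_zero, neg_neg,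
    stdBasisMatrix_neg]
  abel

end AuxW2

section Core
variable {n : ℕ} {R : Type*} [Ring R]

private lemma opaque_unit {G : Type*} (u : G) : ∃ v : G, v = u := ⟨u, rfl⟩

lemma core (σ : (Mat n R)ˣ) (i0 i1 iN : Fin n)
    (h01 : i0 ≠ i1) (h0N : i0 ≠ iN) (h1N : i1 ≠ iN)
    (z : R) (hz : σ.val i0 i0 * z = 1) (b c : R) :
    IsProdConj 8 σ (trv iN i0 (b * (σ.val i0 iN * c))) := by
  classical
  obtain ⟨Sm, hSm⟩ := opaque_unit (Finset.univ.filter (fun j : Fin n => j ≠ i0 ∧ j ≠ iN))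
  have hi0Sm : i0 ∉ Sm := by simp [hSm]
  have hiNSm : iN ∉ Sm := by simp [hSm]
  obtain ⟨Eps, hEmem, hEval0, hEinv0⟩ :=
    row_sum_unit i0 (fun j => -(z * σ.val i0 j)) Sm hi0Sm
  obtain ⟨F, hF⟩ := opaque_unit (∑ j ∈ Sm, single i0 j (-(z * σ.val i0 j)))
  have hEval : Eps.val = 1 + F := by rw [hF]; exact hEval0
  have hEinv : (Eps⁻¹).val = 1 - F := by rw [hF]; exact hEinv0
  obtain ⟨Ψ, hΨ⟩ := opaque_unit (σ.val * Eps.val)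
  have hΨ_expand : Ψ = σ.val + σ.val * F := by rw [hΨ, hEval, mul_add, mul_one]
  have hσF : ∀ j : Fin n, (σ.val * F) i0 j
      = if j ∈ Sm then σ.val i0 i0 * (-(z * σ.val i0 j)) else 0 := by
    intro j
    rw [hF, Finset.mul_sum, Matrix.sum_apply]
    have hterm : ∀ j' ∈ Sm,
        (σ.val * single i0 j' (-(z * σ.val i0 j'))) i0 j
          = if j' = j then σ.val i0 i0 * (-(z * σ.val i0 j')) else 0 := by
      intro j' _
      by_cases hjj : j' = j
      · rw [if_pos hjj, hjj, mul_single_apply_same]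
      · rw [if_neg hjj,
          mul_single_apply_of_ne (-(z * σ.val i0 j')) i0 j' i0 j (Ne.symm hjj)]
    rw [Finset.sum_congr rfl hterm,
      Finset.sum_ite_eq' Sm j (fun j' => σ.val i0 i0 * (-(z * σ.val i0 j')))]
  have hΨ_entry : ∀ j : Fin n, Ψ i0 j = σ.val i0 j + (σ.val * F) i0 j := by
    intro j; rw [hΨ_expand]; simp [Matrix.add_apply]
  have hΨ_mid : ∀ j : Fin n, j ≠ i0 → j ≠ iN → Ψ i0 j = 0 := by
    intro j hj0 hjN
    have hjSm : j ∈ Sm := by simp [hSm, hj0, hjN]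
    rw [hΨ_entry j, hσF j, if_pos hjSm, mul_neg, ← mul_assoc, hz, one_mul, add_neg_cancel]
  have hΨ_0 : Ψ i0 i0 = σ.val i0 i0 := by
    rw [hΨ_entry i0, hσF i0, if_neg hi0Sm, add_zero]
  have hΨ_N : Ψ i0 iN = σ.val i0 iN := by
    rw [hΨ_entry iN, hσF iN, if_neg hiNSm, add_zero]
  -- E21 and α
  obtain ⟨E21, hE21⟩ := opaque_unit (single i1 i0 (1 : R))
  have hΨ11 : Ψ i0 i1 = 0 := hΨ_mid i1 (Ne.symm h01) h1N
  have hΨE21sq : (Ψ * E21) * (Ψ * E21) = 0 := by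
    have hassoc : (Ψ * E21) * (Ψ * E21) = Ψ * (E21 * Ψ * E21) := by noncomm_ring
    rw [hassoc, hE21, ESE i1 i0 i1 i0 (1 : R) (1 : R) Ψ, hΨ11]
    simp
  obtain ⟨S0, hS0⟩ := opaque_unit (Finset.univ.filter (fun j : Fin n => j ≠ i0))
  have hi0S0 : i0 ∉ S0 := by simp [hS0]
  obtain ⟨Alp, hAmem, hAval0, hAinv0⟩ := col_sum_unit i0 (fun j => Ψ j i1) S0 hi0S0
  have hsumA : (∑ j ∈ S0, single j i0 (Ψ j i1)) = Ψ * E21 := by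
    ext a b'
    rw [Matrix.sum_apply]
    by_cases hb : b' = i0
    · rw [hb, hE21, mul_single_apply_same, mul_one]
      by_cases ha : a = i0
      · rw [ha, hΨ11]
        apply Finset.sum_eq_zero
        intro j hj
        have hj0 : j ≠ i0 := by
          rw [hS0] at hj
          exact (Finset.mem_filter.mp hj).2
        exact single_apply_of_row_ne hj0 i0 i0 (Ψ j i1)
      · rw [Finset.sum_eq_single_of_mem a (by simp [hS0, ha])]
        · exact single_apply_same a i0 (Ψ a i1)
        · intro j _ hja
          exact single_apply_of_row_ne hja i0 i0 (Ψ j i1)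
    · rw [hE21, mul_single_apply_of_ne (1 : R) i1 i0 a b' hb]
      apply Finset.sum_eq_zero
      intro j _
      exact single_apply_of_col_ne j a (fun h => hb h.symm) (Ψ j i1)
  have hAval : Alp.val = 1 + Ψ * E21 := by rw [hAval0, hsumA]
  have hAinv : (Alp⁻¹).val = 1 - Ψ * E21 := by rw [hAinv0, hsumA]
  -- Âu
  obtain ⟨Xh, hXh⟩ := opaque_unit
    (single i1 i0 (σ.val i0 i0) + single i1 iN (σ.val i0 iN))
  have hrow : E21 * Ψ = Xh := by
    ext a b'
    by_cases ha : a = i1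
    · rw [ha, hE21, single_mul_apply_same, one_mul, hXh, Matrix.add_apply]
      by_cases hb0 : b' = i0
      · rw [hb0, single_apply_same,
          single_apply_of_col_ne i1 i1 (Ne.symm h0N) (σ.val i0 iN), add_zero, hΨ_0]
      · by_cases hbN : b' = iN
        · rw [hbN, single_apply_of_col_ne i1 i1 h0N (σ.val i0 i0),
            single_apply_same, zero_add, hΨ_N]
        · rw [single_apply_of_col_ne i1 i1 (fun h => hb0 h.symm) (σ.val i0 i0),
            single_apply_of_col_ne i1 i1 (fun h => hbN h.symm) (σ.val i0 iN), add_zero,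
            hΨ_mid b' hb0 hbN]
    · rw [hE21, single_mul_apply_of_ne (1 : R) i1 i0 a b' ha, hXh, Matrix.add_apply,
        single_apply_of_row_ne (fun h => ha h.symm) i0 b' (σ.val i0 i0),
        single_apply_of_row_ne (fun h => ha h.symm) iN b' (σ.val i0 iN), add_zero]
  obtain ⟨Au, hAu⟩ := opaque_unit
    (tu i1 i0 (Ne.symm h01) (σ.val i0 i0) * tu i1 iN h1N (σ.val i0 iN))
  have hAuval : Au.val = 1 + Xh := by
    rw [hAu, Units.val_mul, tu_val, tu_val]
    unfold trv
    rw [add_mul, mul_add, mul_add,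
      single_mul_single_of_ne (σ.val i0 i0) i1 i0 _ h01 (σ.val i0 iN)]
    simp only [one_mul, mul_one]
    rw [hXh]; abel
  have hAuinv : ((Au)⁻¹).val = 1 - Xh := by
    rw [hAu, _root_.mul_inv_rev, Units.val_mul, tu_inv_val, tu_inv_val]
    unfold trv
    rw [add_mul, mul_add, mul_add,
      single_mul_single_of_ne (-(σ.val i0 iN)) i1 iN _ (Ne.symm h1N) (-(σ.val i0 i0))]
    simp only [one_mul, mul_one, stdBasisMatrix_neg]
    rw [hXh]; abel
  have keyA : Alp * (σ * Eps) = (σ * Eps) * Au := by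
    apply Units.ext
    rw [Units.val_mul Alp (σ * Eps), Units.val_mul σ Eps, Units.val_mul (σ * Eps) Au,
      Units.val_mul σ Eps, hAval, hAuval, ← hΨ]
    rw [add_mul, one_mul, mul_add, mul_one, mul_assoc, hrow]
  -- η₁ and D
  obtain ⟨η₁, hη₁⟩ := opaque_unit (Eps⁻¹ * Alp * Eps)
  have hη₁mem : η₁ ∈ En n R := by
    rw [hη₁]; exact mul_mem (mul_mem (inv_mem hEmem) hAmem) hEmem
  have hη₁invdef : η₁⁻¹ = Eps⁻¹ * Alp⁻¹ * Eps := by rw [hη₁]; group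
  obtain ⟨D, hD⟩ := opaque_unit ((Eps⁻¹).val * (Ψ * E21) * Eps.val)
  have hη₁val : η₁.val = 1 + D := by
    rw [hη₁, Units.val_mul (Eps⁻¹ * Alp) Eps, Units.val_mul Eps⁻¹ Alp, hAval, hD, mul_add,
      mul_one, add_mul, Units.inv_mul]
  have hη₁inv : (η₁⁻¹).val = 1 - D := by
    rw [hη₁invdef, Units.val_mul (Eps⁻¹ * Alp⁻¹) Eps, Units.val_mul Eps⁻¹ Alp⁻¹, hAinv, hD,
      mul_sub, mul_one, sub_mul, Units.inv_mul]
  -- N, N3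
  obtain ⟨N, hNdef⟩ := opaque_unit (single iN i0 c)
  obtain ⟨N3, hN3def⟩ := opaque_unit (single iN i1 b)
  obtain ⟨ηc, hηc⟩ := opaque_unit (tu iN i0 (Ne.symm h0N) c)
  obtain ⟨η₃, hη₃⟩ := opaque_unit (tu iN i1 (Ne.symm h1N) b)
  have hηcval : ηc.val = 1 + N := by rw [hηc, tu_val, hNdef]; rfl
  have hηcinv : ((ηc)⁻¹).val = 1 - N := by rw [hηc, tu_inv_val, trv_neg, hNdef]
  have hη₃val : η₃.val = 1 + N3 := by rw [hη₃, tu_val, hN3def]; rfl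
  have hη₃inv : ((η₃)⁻¹).val = 1 - N3 := by rw [hη₃, tu_inv_val, trv_neg, hN3def]
  -- products with F and D
  have hFrowN : ∀ (l : Fin n) (x : R), F * single iN l x = 0 := by
    intro l x
    rw [hF, Finset.sum_mul]
    apply Finset.sum_eq_zero
    intro j hj
    have hjN : j ≠ iN := by
      rw [hSm] at hj
      exact ((Finset.mem_filter.mp hj).2).2
    exact single_mul_single_of_ne _ i0 j _ hjN x
  have hEpsN : Eps.val * N = N := by
    rw [hEval, add_mul, one_mul, hNdef, hFrowN, add_zero]
  have hEpsN3 : Eps.val * N3 = N3 := by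
    rw [hEval, add_mul, one_mul, hN3def, hFrowN, add_zero]
  have hE21N : E21 * N = 0 := by
    rw [hE21, hNdef]; exact single_mul_single_of_ne (1 : R) i1 i0 _ h0N c
  have hE21N3 : E21 * N3 = 0 := by
    rw [hE21, hN3def]; exact single_mul_single_of_ne (1 : R) i1 i0 _ h0N b
  have hDN : D * N = 0 := by
    rw [hD, mul_assoc ((Eps⁻¹).val * (Ψ * E21)) Eps.val N, hEpsN,
      mul_assoc (Eps⁻¹).val (Ψ * E21) N, mul_assoc Ψ E21 N, hE21N, mul_zero, mul_zero]
  have hDN3 : D * N3 = 0 := by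
    rw [hD, mul_assoc ((Eps⁻¹).val * (Ψ * E21)) Eps.val N3, hEpsN3,
      mul_assoc (Eps⁻¹).val (Ψ * E21) N3, mul_assoc Ψ E21 N3, hE21N3, mul_zero, mul_zero]
  have hDD : D * D = 0 := by
    rw [hD]
    have hassoc : (Eps⁻¹).val * (Ψ * E21) * Eps.val * ((Eps⁻¹).val * (Ψ * E21) * Eps.val)
        = (Eps⁻¹).val * ((Ψ * E21) * (Eps.val * (Eps⁻¹).val) * ((Ψ * E21) * Eps.val)) := by
      noncomm_ring
    rw [hassoc, Units.mul_inv, mul_one, ← mul_assoc (Ψ * E21) (Ψ * E21) Eps.val, hΨE21sq,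
      zero_mul, mul_zero]
  -- ζ
  obtain ⟨Zet, hZet⟩ := opaque_unit (ηc * η₁ * ηc⁻¹ * η₁⁻¹)
  have hNN : N * N = 0 := by
    rw [hNdef]; exact single_mul_single_of_ne c iN i0 _ h0N c
  have hZetval : Zet.val = 1 + N * D := by
    rw [hZet, Units.val_mul (ηc * η₁ * ηc⁻¹) η₁⁻¹, Units.val_mul (ηc * η₁) ηc⁻¹,
      Units.val_mul ηc η₁, hηcval, hη₁val, hηcinv, hη₁inv]
    exact comm4 N D hNN hDD hDN
  have hNDN3 : (N * D) * N3 = 0 := by rw [mul_assoc, hDN3, mul_zero]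
  have hN3N : N3 * N = 0 := by
    rw [hN3def, hNdef]; exact single_mul_single_of_ne b iN i1 _ h1N c
  have hN3ND : N3 * (N * D) = 0 := by rw [← mul_assoc, hN3N, zero_mul]
  have hζcomm : Zet * η₃ = η₃ * Zet := by
    apply Units.ext
    rw [Units.val_mul Zet η₃, Units.val_mul η₃ Zet, hZetval, hη₃val]
    have e1 : (1 + N * D) * (1 + N3) = 1 + N * D + N3 + (N * D) * N3 := by noncomm_ring
    have e2 : (1 + N3) * (1 + N * D) = 1 + N3 + N * D + N3 * (N * D) := by noncomm_ring
    rw [e1, e2, hNDN3, hN3ND, add_zero, add_zero]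
    abel
  -- Com1
  obtain ⟨Com1, hCom1def⟩ := opaque_unit (Au * ηc * Au⁻¹ * ηc⁻¹)
  have hXhXh : Xh * Xh = 0 := by
    rw [hXh, add_mul, mul_add, mul_add,
      single_mul_single_of_ne (σ.val i0 i0) i1 i0 _ h01 (σ.val i0 i0),
      single_mul_single_of_ne (σ.val i0 i0) i1 i0 _ h01 (σ.val i0 iN),
      single_mul_single_of_ne (σ.val i0 iN) i1 iN _ (Ne.symm h1N) (σ.val i0 i0),
      single_mul_single_of_ne (σ.val i0 iN) i1 iN _ (Ne.symm h1N) (σ.val i0 iN)]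
    simp
  have hNXh : N * Xh = 0 := by
    rw [hNdef, hXh, mul_add, single_mul_single_of_ne c iN i0 _ h01 (σ.val i0 i0),
      single_mul_single_of_ne c iN i0 _ h01 (σ.val i0 iN), add_zero]
  have hXhN : Xh * N = single i1 i0 (σ.val i0 iN * c) := by
    rw [hXh, hNdef, add_mul, single_mul_single_of_ne (σ.val i0 i0) i1 i0 _ h0N c,
      single_mul_single_same (σ.val i0 iN) i1 iN i0 c, zero_add]
  have hCom1 : Com1 = tu i1 i0 (Ne.symm h01) (σ.val i0 iN * c) := by
    apply Units.ext
    rw [hCom1def, Units.val_mul (Au * ηc * Au⁻¹) ηc⁻¹, Units.val_mul (Au * ηc) Au⁻¹,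
      Units.val_mul Au ηc, hAuval, hηcval, hAuinv, hηcinv,
      tu_val, comm4 Xh N hXhXh hNN hNXh, hXhN]
    rfl
  -- X₁, T₂, T
  obtain ⟨c1, hc1⟩ := opaque_unit (Eps⁻¹ * σ⁻¹ * Eps)
  obtain ⟨c2, hc2⟩ := opaque_unit (η₁ * (Eps⁻¹ * σ * Eps) * η₁⁻¹)
  obtain ⟨X₁, hX₁def⟩ := opaque_unit (c1 * c2)
  obtain ⟨η₂, hη₂⟩ := opaque_unit (η₁ * ηc * η₁⁻¹)
  have hηcmem : ηc ∈ En n R := by rw [hηc]; exact tu_mem (Ne.symm h0N) c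
  have hη₂mem : η₂ ∈ En n R := by
    rw [hη₂]
    exact mul_mem (mul_mem hη₁mem hηcmem) (inv_mem hη₁mem)
  have hX₁ : X₁ = Au * η₁⁻¹ := by
    have hAu' : Au = (σ * Eps)⁻¹ * (Alp * (σ * Eps)) := by rw [keyA]; group
    rw [hX₁def, hc1, hc2, hη₁, hAu']
    group
  obtain ⟨T2, hT2def⟩ := opaque_unit (X₁ * η₂ * X₁⁻¹ * η₂⁻¹)
  have hT2 : T2 = Com1 * Zet := by
    rw [hT2def, hX₁, hη₂, hCom1def, hZet]
    group
  obtain ⟨T, hTdef⟩ := opaque_unit (η₃ * T2 * η₃⁻¹ * T2⁻¹)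
  have hT : T = η₃ * Com1 * η₃⁻¹ * Com1⁻¹ := by
    have hZcomm : Commute Zet η₃ := hζcomm
    have hZ : Zet * η₃⁻¹ = η₃⁻¹ * Zet := (hZcomm.inv_right).eq
    rw [hTdef, hT2]
    calc η₃ * (Com1 * Zet) * η₃⁻¹ * (Com1 * Zet)⁻¹
        = η₃ * Com1 * (Zet * η₃⁻¹) * (Zet⁻¹ * Com1⁻¹) := by group
      _ = η₃ * Com1 * (η₃⁻¹ * Zet) * (Zet⁻¹ * Com1⁻¹) := by rw [hZ]
      _ = η₃ * Com1 * η₃⁻¹ * Com1⁻¹ := by group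
  have hTval : T = tu iN i0 (Ne.symm h0N) (b * (σ.val i0 iN * c)) := by
    rw [hT, hCom1]
    apply Units.ext
    rw [Units.val_mul (η₃ * tu i1 i0 (Ne.symm h01) (σ.val i0 iN * c) * η₃⁻¹)
        (tu i1 i0 (Ne.symm h01) (σ.val i0 iN * c))⁻¹,
      Units.val_mul (η₃ * tu i1 i0 (Ne.symm h01) (σ.val i0 iN * c)) η₃⁻¹,
      Units.val_mul η₃ (tu i1 i0 (Ne.symm h01) (σ.val i0 iN * c)),
      hη₃val, tu_val, hη₃inv, tu_inv_val, trv_neg, tu_val]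
    have h1 : N3 * N3 = 0 := by
      rw [hN3def]; exact single_mul_single_of_ne b iN i1 _ h1N b
    have h2 : single i1 i0 (σ.val i0 iN * c) * single i1 i0 (σ.val i0 iN * c)
        = 0 := single_mul_single_of_ne (σ.val i0 iN * c) i1 i0 _ h01 (σ.val i0 iN * c)
    have h3 : single i1 i0 (σ.val i0 iN * c) * N3 = 0 := by
      rw [hN3def]; exact single_mul_single_of_ne (σ.val i0 iN * c) i1 i0 _ h0N b
    have h4 : N3 * single i1 i0 (σ.val i0 iN * c)
        = single iN i0 (b * (σ.val i0 iN * c)) := by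
      rw [hN3def]; exact single_mul_single_same b iN i1 i0 (σ.val i0 iN * c)
    show (1 + N3) * trv i1 i0 (σ.val i0 iN * c) * (1 - N3)
        * (1 - single i1 i0 (σ.val i0 iN * c)) = trv iN i0 (b * (σ.val i0 iN * c))
    unfold trv
    rw [comm4 N3 (single i1 i0 (σ.val i0 iN * c)) h1 h2 h3, h4]
  -- the eight conjugates
  obtain ⟨ξ₁, hξ₁⟩ := opaque_unit (Eps * η₃⁻¹)
  obtain ⟨ξ₂, hξ₂⟩ := opaque_unit (Eps * η₁⁻¹ * η₃⁻¹)
  obtain ⟨ξ₃, hξ₃⟩ := opaque_unit (Eps * η₁⁻¹ * η₂⁻¹ * η₃⁻¹)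
  obtain ⟨ξ₄, hξ₄⟩ := opaque_unit (Eps * η₂⁻¹ * η₃⁻¹)
  obtain ⟨ξ₅, hξ₅⟩ := opaque_unit (Eps * η₂⁻¹)
  obtain ⟨ξ₆, hξ₆⟩ := opaque_unit (Eps * η₁⁻¹ * η₂⁻¹)
  obtain ⟨ξ₇, hξ₇⟩ := opaque_unit (Eps * η₁⁻¹)
  have hη₃mem : η₃ ∈ En n R := by rw [hη₃]; exact tu_mem (Ne.symm h1N) b
  have hξ₁mem : ξ₁ ∈ En n R := by rw [hξ₁]; exact mul_mem hEmem (inv_mem hη₃mem)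
  have hξ₂mem : ξ₂ ∈ En n R := by
    rw [hξ₂]; exact mul_mem (mul_mem hEmem (inv_mem hη₁mem)) (inv_mem hη₃mem)
  have hξ₃mem : ξ₃ ∈ En n R := by
    rw [hξ₃]
    exact mul_mem (mul_mem (mul_mem hEmem (inv_mem hη₁mem)) (inv_mem hη₂mem)) (inv_mem hη₃mem)
  have hξ₄mem : ξ₄ ∈ En n R := by
    rw [hξ₄]; exact mul_mem (mul_mem hEmem (inv_mem hη₂mem)) (inv_mem hη₃mem)
  have hξ₅mem : ξ₅ ∈ En n R := by rw [hξ₅]; exact mul_mem hEmem (inv_mem hη₂mem)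
  have hξ₆mem : ξ₆ ∈ En n R := by
    rw [hξ₆]; exact mul_mem (mul_mem hEmem (inv_mem hη₁mem)) (inv_mem hη₂mem)
  have hξ₇mem : ξ₇ ∈ En n R := by rw [hξ₇]; exact mul_mem hEmem (inv_mem hη₁mem)
  obtain ⟨g1, hg1⟩ := opaque_unit (ξ₁⁻¹ * σ⁻¹ * ξ₁)
  obtain ⟨g2, hg2⟩ := opaque_unit (ξ₂⁻¹ * σ * ξ₂)
  obtain ⟨g3, hg3⟩ := opaque_unit (ξ₃⁻¹ * σ⁻¹ * ξ₃)
  obtain ⟨g4, hg4⟩ := opaque_unit (ξ₄⁻¹ * σ * ξ₄)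
  obtain ⟨g5, hg5⟩ := opaque_unit (ξ₅⁻¹ * σ⁻¹ * ξ₅)
  obtain ⟨g6, hg6⟩ := opaque_unit (ξ₆⁻¹ * σ * ξ₆)
  obtain ⟨g7, hg7⟩ := opaque_unit (ξ₇⁻¹ * σ⁻¹ * ξ₇)
  obtain ⟨g8, hg8⟩ := opaque_unit (Eps⁻¹ * σ * Eps)
  have hgoal : g1 * (g2 * (g3 * (g4 * (g5 * (g6 * (g7 * g8)))))) = T := by
    rw [hg1, hg2, hg3, hg4, hg5, hg6, hg7, hg8, hTdef, hT2def, hX₁def, hc1, hc2,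
      hξ₁, hξ₂, hξ₃, hξ₄, hξ₅, hξ₆, hξ₇, hη₂, hη₁]
    group
  refine ⟨![g1, g2, g3, g4, g5, g6, g7, g8], ?_, ?_⟩
  · intro p
    fin_cases p
    · exact ⟨ξ₁, hξ₁mem, Or.inr hg1⟩
    · exact ⟨ξ₂, hξ₂mem, Or.inl hg2⟩
    · exact ⟨ξ₃, hξ₃mem, Or.inr hg3⟩
    · exact ⟨ξ₄, hξ₄mem, Or.inl hg4⟩
    · exact ⟨ξ₅, hξ₅mem, Or.inr hg5⟩
    · exact ⟨ξ₆, hξ₆mem, Or.inl hg6⟩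
    · exact ⟨ξ₇, hξ₇mem, Or.inr hg7⟩
    · exact ⟨Eps, hEmem, Or.inl hg8⟩
  · have hofn : List.ofFn ![g1, g2, g3, g4, g5, g6, g7, g8]
        = [g1, g2, g3, g4, g5, g6, g7, g8] := by
      simp [List.ofFn_succ]
    rw [hofn]
    simp only [List.prod_cons, List.prod_nil, mul_one]
    rw [hgoal, hTval, tu_val]

end Core

section Transfer
variable {n : ℕ} {R : Type*} [Ring R]

lemma wey_mem (p q : Fin n) (h : p ≠ q) : wey p q h ∈ En n R :=
  mul_mem (mul_mem (tu_mem h 1) (tu_mem h.symm (-1))) (tu_mem h 1)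

lemma conj_list_prod {G : Type*} [Group G] (w : G) (l : List G) :
    (l.map fun x => w⁻¹ * x * w).prod = w⁻¹ * l.prod * w := by
  induction l with
  | nil => simp
  | cons a l ih => rw [List.map_cons, List.prod_cons, List.prod_cons, ih]; group

lemma conj_IsProdConj {m : ℕ} (σ U w : (Mat n R)ˣ) (hw : w ∈ En n R)
    (h : IsProdConj m σ U.val) : IsProdConj m σ ((w⁻¹ * U * w).val) := by
  obtain ⟨g, hg, hprod⟩ := h
  have hU : (List.ofFn g).prod = U := Units.ext hprod
  refine ⟨fun p => w⁻¹ * g p * w, ?_, ?_⟩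
  · intro p
    obtain ⟨ξ, hξ, hcase⟩ := hg p
    refine ⟨ξ * w, mul_mem hξ hw, ?_⟩
    rcases hcase with h' | h'
    · left; show w⁻¹ * g p * w = _; rw [h']; group
    · right; show w⁻¹ * g p * w = _; rw [h']; group
  · have heq : (List.ofFn fun p => w⁻¹ * g p * w) = (List.ofFn g).map (fun x => w⁻¹ * x * w) := by
      rw [List.map_ofFn]; rfl
    rw [heq, conj_list_prod, hU]

lemma stmt5_aux (σ : (Mat n R)ˣ) (i0 i1 iN : Fin n)
    (h01 : i0 ≠ i1) (h0N : i0 ≠ iN) (h1N : i1 ≠ iN)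
    (z : R) (hz : σ.val i0 i0 * z = 1) (k l : Fin n) (hkl : k ≠ l) (a b : R) :
    IsProdConj 8 σ (trv k l (a * σ.val i0 iN * b)) := by
  have hcore : ∀ b' c' : R,
      IsProdConj 8 σ ((tu iN i0 (Ne.symm h0N) (b' * (σ.val i0 iN * c'))).val) :=
    fun b' c' => core σ i0 i1 iN h01 h0N h1N z hz b' c'
  by_cases hlN : l = iN
  · rw [hlN] at hkl ⊢
    have h1 := conj_IsProdConj σ (tu iN i0 (Ne.symm h0N) (-a * (σ.val i0 iN * b)))
      (wey iN i0 (Ne.symm h0N)) (wey_mem iN i0 (Ne.symm h0N)) (hcore (-a) b)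
    rw [weyC iN i0 (Ne.symm h0N) (-a * (σ.val i0 iN * b))] at h1
    have hneg : -(-a * (σ.val i0 iN * b)) = a * (σ.val i0 iN * b) := by
      rw [neg_mul, neg_neg]
    rw [hneg] at h1
    by_cases hk0 : k = i0
    · rw [hk0, mul_assoc]; exact h1
    · have h0k : i0 ≠ k := fun h => hk0 h.symm
      have h2 := conj_IsProdConj σ _ (wey i0 k h0k) (wey_mem i0 k h0k) h1
      rw [weyB i0 k iN h0k (Ne.symm h0N) (Ne.symm hkl)] at h2
      rw [mul_assoc]; exact h2
  · by_cases hl0 : l = i0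
    · rw [hl0] at hkl ⊢
      by_cases hkN : k = iN
      · rw [hkN, mul_assoc]; exact hcore a b
      · have hNk : iN ≠ k := fun h => hkN h.symm
        have h1 := conj_IsProdConj σ (tu iN i0 (Ne.symm h0N) (a * (σ.val i0 iN * b)))
          (wey iN k hNk) (wey_mem iN k hNk) (hcore a b)
        rw [weyB iN k i0 hNk h0N (Ne.symm hkl)] at h1
        rw [mul_assoc]; exact h1
    · have h0l : i0 ≠ l := fun h => hl0 h.symm
      have h1 := conj_IsProdConj σ (tu iN i0 (Ne.symm h0N) (a * (σ.val i0 iN * b)))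
        (wey i0 l h0l) (wey_mem i0 l h0l) (hcore a b)
      rw [weyA i0 l iN h0l (Ne.symm h0N) (Ne.symm hlN)] at h1
      by_cases hkN : k = iN
      · rw [hkN, mul_assoc]; exact h1
      · have hNk : iN ≠ k := fun h => hkN h.symm
        have h2 := conj_IsProdConj σ _ (wey iN k hNk) (wey_mem iN k hNk) h1
        rw [weyB iN k l hNk hlN (Ne.symm hkl)] at h2
        rw [mul_assoc]; exact h2

end Transfer

theorem stmt5 {R : Type*} [Ring R] [Nontrivial R] {n : ℕ} (hn : 3 ≤ n)
    (σ : (Mat n R)ˣ)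
    (h11 : ∃ z : R, σ.val ⟨0, by omega⟩ ⟨0, by omega⟩ * z = 1)
    (k l : Fin n) (hkl : k ≠ l) (a b : R) :
    IsProdConj 8 σ (trv k l (a * σ.val ⟨0, by omega⟩ ⟨n - 1, by omega⟩ * b)) := by
  obtain ⟨z, hz⟩ := h11
  have h01 : (⟨0, by omega⟩ : Fin n) ≠ (⟨1, by omega⟩ : Fin n) := by
    simp [Fin.ext_iff]
  have h0N : (⟨0, by omega⟩ : Fin n) ≠ (⟨n - 1, by omega⟩ : Fin n) := by
    simp [Fin.ext_iff]; omega
  have h1N : (⟨1, by omega⟩ : Fin n) ≠ (⟨n - 1, by omega⟩ : Fin n) := by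
    simp [Fin.ext_iff]; omega
  exact stmt5_aux σ ⟨0, by omega⟩ ⟨1, by omega⟩ ⟨n - 1, by omega⟩ h01 h0N h1N z hz k l hkl a b
end

section
/- Suppose the stable rank sr(R) of R satisfies sr(R) < n, and let σ ∈ GL_n(R). Then there exists ρ ∈ E*_n(R) such that the row vector ((σ^ρ)_{11}, …, (σ^ρ)_{1,sr(R)}) of the first sr(R) entries of the first row of σ^ρ = ρ^{-1}σρ is unimodular. -/
open Matrix

/-- A row vector `u` is unimodular if `u v = 1` for some column vector `v`. -/
def Unimodular {m : ℕ} {R : Type*} [Ring R] (u : Fin m → R) : Prop :=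
  ∃ v : Fin m → R, ∑ p, u p * v p = 1

/-- The stable range condition at `m`: for any `p ≥ m` and any unimodular row of
length `p + 1` there are `x_1, …, x_p` such that `(u_1 + u_{p+1}x_1, …, u_p + u_{p+1}x_p)`
is unimodular. -/
def StableRange (R : Type*) [Ring R] (m : ℕ) : Prop :=
  ∀ p : ℕ, m ≤ p → ∀ u : Fin (p + 1) → R, Unimodular u →
    ∃ x : Fin p → R, Unimodular fun q : Fin p => u q.castSucc + u (Fin.last p) * x q

/-- `sr(R) = m`: `m` is the least positive integer satisfying the stable range condition. -/
def HasStableRank (R : Type*) [Ring R] (m : ℕ) : Prop :=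
  IsLeast {k : ℕ | 1 ≤ k ∧ StableRange R k} m

/-- The subgroup E*_n(R) of GL_n(R) generated by the transvections t_{kl}(x)
with k ≠ l, k ≠ 1 and l ≠ n. -/
def Estar (n : ℕ) (R : Type*) [Ring R] : Subgroup (Mat n R)ˣ :=
  Subgroup.closure
    { u : (Mat n R)ˣ | ∃ k l : Fin n, k ≠ l ∧ k.val ≠ 0 ∧ l.val ≠ n - 1 ∧
        ∃ x : R, u.val = trv k l x }

/-!
Every generator `t_{kl}(x)` of `E*_n(R)` has `k ≠ 1`, so every `ρ ∈ E*_n(R)` has first row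
`e_1`, and the first row of `ρ⁻¹ σ ρ` equals that of `σ ρ`. Right multiplication by
`t_{pl}(x)` adds `x` times column `p` to column `l`, and for `1 < p`, `l < p` these
transvections lie in `E*_n(R)`. The first row of `σ` is unimodular, and the stable range
condition, applied to its first `p + 1` entries and realised by such column operations,
shortens the unimodular prefix by one entry at a time, from length `n` down to `sr(R)`.
-/

section

variable {R : Type*} [Ring R] {n : ℕ}

lemma unimodular_row_of_unit (σ : (Mat n R)ˣ) (i : Fin n) : Unimodular (σ.val i) :=
  ⟨fun k => σ⁻¹.val k i, by rw [← mul_apply, σ.mul_inv, one_apply_eq]⟩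

lemma trv_mul_trv {i j : Fin n} (hij : i ≠ j) (x y : R) :
    trv i j x * trv i j y = trv i j (x + y) := by
  rw [trv, trv, trv, add_mul, one_mul, mul_add, mul_one, single_mul_single_of_ne (h := hij.symm),
    single_add, add_zero]
  abel

lemma trv_mul_apply_of_ne {k l i : Fin n} (hik : i ≠ k) (x : R) (B : Mat n R) :
    (trv k l x * B) i = B i := by
  ext c
  rw [trv, add_mul, one_mul, Matrix.add_apply, single_mul_apply_of_ne _ _ _ _ _ hik, add_zero]

lemma exists_mem_estar_val_eq_trv {k l : Fin n} (hkl : k ≠ l) (hk : k.val ≠ 0)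
    (hl : l.val ≠ n - 1) (x : R) : ∃ τ ∈ Estar n R, τ.val = trv k l x :=
  ⟨⟨trv k l x, trv k l (-x), by rw [trv_mul_trv hkl, add_neg_cancel, trv, single_zero, add_zero],
      by rw [trv_mul_trv hkl, neg_add_cancel, trv, single_zero, add_zero]⟩,
    Subgroup.subset_closure ⟨k, l, hkl, hk, hl, x, rfl⟩, rfl⟩

lemma Estar.mul_apply_of_val_eq_zero {ρ : (Mat n R)ˣ} (hρ : ρ ∈ Estar n R) (B : Mat n R)
    {i : Fin n} (hi : i.val = 0) : (ρ.val * B) i = B i := by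
  induction hρ using Subgroup.closure_induction generalizing B with
  | mem τ hτ =>
    obtain ⟨k, l, -, hk, -, x, hτ⟩ := hτ
    have hik : i ≠ k := fun h => hk (h ▸ hi)
    rw [hτ, trv_mul_apply_of_ne hik]
  | one => rw [Units.val_one, one_mul]
  | mul τ τ' _ _ hτ hτ' => rw [Units.val_mul, mul_assoc, hτ, hτ']
  | inv τ _ hτ => rw [← hτ (τ⁻¹.val * B), ← mul_assoc, τ.mul_inv, one_mul]

lemma exists_mem_estar_val_eq_one_add_sum (p : Fin n) (hp : p.val ≠ 0) (x : Fin n → R)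
    (S : Finset (Fin n)) (hpS : p ∉ S) (hS : ∀ l ∈ S, l.val ≠ n - 1) :
    ∃ τ ∈ Estar n R, τ.val = 1 + ∑ l ∈ S, single p l (x l) := by
  induction S using Finset.induction_on with
  | empty => exact ⟨1, one_mem _, by simp⟩
  | @insert a S haS ih =>
    have hpa : p ≠ a := fun h => hpS (h ▸ Finset.mem_insert_self a S)
    obtain ⟨τ, hτ, hτval⟩ := ih (fun h => hpS (Finset.mem_insert_of_mem h))
      (fun l hl => hS l (Finset.mem_insert_of_mem hl))
    obtain ⟨t, ht, htval⟩ :=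
      exists_mem_estar_val_eq_trv hpa hp (hS a (Finset.mem_insert_self a S)) (x a)
    refine ⟨t * τ, mul_mem ht hτ, ?_⟩
    rw [Units.val_mul, hτval, htval, trv, Finset.sum_insert haS, add_mul, one_mul, mul_add,
      mul_one, Finset.mul_sum,
      Finset.sum_eq_zero fun l _ => single_mul_single_of_ne (x a) p a p hpa.symm (x l), add_zero]
    abel

lemma mul_one_add_sum_single_apply (A : Mat n R) (p : Fin n) (x : Fin n → R)
    (S : Finset (Fin n)) (i : Fin n) {c : Fin n} (hc : c ∈ S) :
    (A * (1 + ∑ l ∈ S, single p l (x l))) i c = A i c + A i p * x c := by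
  rw [mul_add, mul_one, Matrix.add_apply, Finset.mul_sum, Matrix.sum_apply,
    Finset.sum_eq_single_of_mem c hc fun l _ hlc => mul_single_apply_of_ne _ _ _ _ _ hlc.symm A,
    mul_single_apply_same]

lemma exists_mem_estar_unimodular_prefix_of_succ {m p : ℕ} (hsr : StableRange R m) (hmp : m ≤ p)
    (hp : p ≠ 0) (hpn : p < n) (A : Mat n R) (i : Fin n)
    (hA : Unimodular fun q : Fin (p + 1) => A i (Fin.castLE hpn q)) :
    ∃ τ ∈ Estar n R, Unimodular fun q : Fin p => (A * τ.val) i (Fin.castLE hpn.le q) := by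
  obtain ⟨x, hx⟩ := hsr p hmp _ hA
  let pivot : Fin n := ⟨p, hpn⟩
  let S : Finset (Fin n) := Finset.univ.filter (·.val < p)
  let y : Fin n → R := fun l => if h : l.val < p then x ⟨l, h⟩ else 0
  obtain ⟨τ, hτ, hτval⟩ := exists_mem_estar_val_eq_one_add_sum pivot hp y S
    (by simp [S, pivot]) (fun l hl => by simp only [S, Finset.mem_filter] at hl; omega)
  refine ⟨τ, hτ, ?_⟩
  convert hx using 2 with q
  rw [hτval, mul_one_add_sum_single_apply _ _ _ _ _ (by simp [S])]
  simp only [y, Fin.val_castLE, q.isLt, dite_true]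
  rfl

lemma exists_mem_estar_unimodular_prefix {m : ℕ} (hsr : StableRange R m) (hm : 1 ≤ m)
    (σ : (Mat n R)ˣ) (i : Fin n) {k : ℕ} (hmk : m ≤ k) (hkn : k ≤ n) :
    ∃ ρ ∈ Estar n R, Unimodular fun q : Fin k => (σ.val * ρ.val) i (Fin.castLE hkn q) := by
  induction hkn using Nat.decreasingInduction with
  | self => exact ⟨1, one_mem _, by simpa using unimodular_row_of_unit σ i⟩
  | of_succ k hkn ih =>
    obtain ⟨ρ, hρ, hunim⟩ := ih (hmk.trans k.le_succ)
    obtain ⟨τ, hτ, hτunim⟩ :=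
      exists_mem_estar_unimodular_prefix_of_succ hsr hmk (by omega) hkn _ i hunim
    exact ⟨ρ * τ, mul_mem hρ hτ, by simpa [mul_assoc] using hτunim⟩

end

theorem stmt11 {R : Type*} [Ring R] {n : ℕ}
    (m : ℕ) (hsr : HasStableRank R m) (hmn : m < n) (σ : (Mat n R)ˣ) :
    ∃ ρ ∈ Estar n R, Unimodular fun q : Fin m =>
      (ρ⁻¹ * σ * ρ).val ⟨0, by omega⟩
        ⟨q.val, by have := q.isLt; omega⟩ := by
  obtain ⟨hm, hstable⟩ := hsr.1
  obtain ⟨ρ, hρ, hunim⟩ :=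
    exists_mem_estar_unimodular_prefix hstable hm σ ⟨0, by omega⟩ le_rfl hmn.le
  refine ⟨ρ, hρ, ?_⟩
  rwa [mul_assoc, Units.val_mul, Estar.mul_apply_of_val_eq_zero (inv_mem hρ) _ rfl]
end
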